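/- arXiv:1610.04901 — 7 statements merged into one kernel-verified Lean document; each statement's English description precedes it below -/
import Mathlib

section
/- If a, b1, b2 are nonzero vectors in the three-dimensional second-order cone Q with ⟨a, b1⟩ = 0 and ⟨a, b2⟩ = 0, then b1 and b2 are collinear, i.e., there exists a scalar c with b2 = c • b1. -/
/-- The three-dimensional second-order cone. -/
def soc (v : Fin 3 → ℝ) : Prop := Real.sqrt (v 0 ^ 2 + v 1 ^ 2) ≤ v 2

lemma soc_pos_last (a : Fin 3 → ℝ) (ha : soc a) (ha0 : a ≠ 0) : 0 < a 2 := by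
  have hnn : 0 ≤ a 2 := le_trans (Real.sqrt_nonneg _) ha
  rcases hnn.lt_or_eq with h' | h'
  · exact h'
  · exfalso
    apply ha0
    have h0 : Real.sqrt (a 0 ^ 2 + a 1 ^ 2) = 0 :=
      le_antisymm (h' ▸ ha) (Real.sqrt_nonneg _)
    have harg : a 0 ^ 2 + a 1 ^ 2 ≤ 0 := Real.sqrt_eq_zero'.mp h0
    have h00 : a 0 = 0 := by nlinarith [sq_nonneg (a 0), sq_nonneg (a 1)]
    have h11 : a 1 = 0 := by nlinarith [sq_nonneg (a 0), sq_nonneg (a 1)]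
    funext i
    fin_cases i <;> simp [h00, h11, h'.symm]

lemma soc_key (a b : Fin 3 → ℝ) (ha : soc a) (hb : soc b) (ha0 : a ≠ 0) (hb0 : b ≠ 0)
    (h : ∑ i, a i * b i = 0) :
    a 2 * b 0 = -(b 2 * a 0) ∧ a 2 * b 1 = -(b 2 * a 1) := by
  have hpa : 0 < a 2 := soc_pos_last a ha ha0
  have hpb : 0 < b 2 := soc_pos_last b hb hb0
  have ha' : Real.sqrt (a 0 ^ 2 + a 1 ^ 2) ≤ a 2 := ha
  have hb' : Real.sqrt (b 0 ^ 2 + b 1 ^ 2) ≤ b 2 := hb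
  have h2a : a 0 ^ 2 + a 1 ^ 2 ≤ a 2 ^ 2 := by
    nlinarith [Real.sq_sqrt (by positivity : (0:ℝ) ≤ a 0 ^ 2 + a 1 ^ 2),
      Real.sqrt_nonneg (a 0 ^ 2 + a 1 ^ 2), ha']
  have h2b : b 0 ^ 2 + b 1 ^ 2 ≤ b 2 ^ 2 := by
    nlinarith [Real.sq_sqrt (by positivity : (0:ℝ) ≤ b 0 ^ 2 + b 1 ^ 2),
      Real.sqrt_nonneg (b 0 ^ 2 + b 1 ^ 2), hb']
  have hsum : a 0 * b 0 + a 1 * b 1 + a 2 * b 2 = 0 := by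
    simpa [Fin.sum_univ_three] using h
  have heq1 : a 0 ^ 2 + a 1 ^ 2 = a 2 ^ 2 := by
    refine le_antisymm h2a ?_
    nlinarith [sq_nonneg (a 0 * b 1 - a 1 * b 0), sq_nonneg (a 0 * b 0 + a 1 * b 1),
      mul_pos hpb hpb, mul_pos hpa hpb]
  have hcs : a 0 * b 1 - a 1 * b 0 = 0 := by
    have hsq : (a 0 * b 1 - a 1 * b 0) ^ 2 = 0 := by
      have hle : (a 0 * b 1 - a 1 * b 0) ^ 2 ≤ 0 := by
        nlinarith [sq_nonneg (a 0 * b 0 + a 1 * b 1), mul_pos hpa hpb]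
      exact le_antisymm hle (sq_nonneg _)
    exact pow_eq_zero_iff (by norm_num) |>.mp hsq
  constructor
  · have h5 : a 2 * (a 2 * b 0 + b 2 * a 0) = 0 := by
      linear_combination a 0 * hsum - a 1 * hcs - b 0 * heq1
    have := (mul_eq_zero.mp h5).resolve_left (ne_of_gt hpa)
    linarith
  · have h5 : a 2 * (a 2 * b 1 + b 2 * a 1) = 0 := by
      linear_combination a 1 * hsum + a 0 * hcs - b 1 * heq1
    have := (mul_eq_zero.mp h5).resolve_left (ne_of_gt hpa)
    linarith

theorem soc_orth_collinear (a b1 b2 : Fin 3 → ℝ)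
    (ha : soc a) (hb1 : soc b1) (hb2 : soc b2)
    (ha0 : a ≠ 0) (hb10 : b1 ≠ 0) (hb20 : b2 ≠ 0)
    (h1 : ∑ i, a i * b1 i = 0) (h2 : ∑ i, a i * b2 i = 0) :
    ∃ c : ℝ, b2 = c • b1 := by
  have hpa : 0 < a 2 := soc_pos_last a ha ha0
  have hp1 : 0 < b1 2 := soc_pos_last b1 hb1 hb10
  have hp2 : 0 < b2 2 := soc_pos_last b2 hb2 hb20
  obtain ⟨k10, k11⟩ := soc_key a b1 ha hb1 ha0 hb10 h1
  obtain ⟨k20, k21⟩ := soc_key a b2 ha hb2 ha0 hb20 h2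
  refine ⟨b2 2 / b1 2, ?_⟩
  funext i
  fin_cases i <;> simp only [Pi.smul_apply, smul_eq_mul]
  · show b2 0 = b2 2 / b1 2 * b1 0
    rw [div_mul_eq_mul_div, eq_div_iff (ne_of_gt hp1)]
    apply mul_left_cancel₀ (ne_of_gt hpa)
    linear_combination b1 2 * k20 - b2 2 * k10
  · show b2 1 = b2 2 / b1 2 * b1 1
    rw [div_mul_eq_mul_div, eq_div_iff (ne_of_gt hp1)]
    apply mul_left_cancel₀ (ne_of_gt hpa)
    linear_combination b1 2 * k21 - b2 2 * k11
  · show b2 2 = b2 2 / b1 2 * b1 2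
    field_simp
end

section
/- If a = (a', t) and b = (b', s) are nonzero elements of the second-order cone Q with ⟨a, b⟩ = 0, then t = ‖a'‖, s = ‖b'‖, and b = |α| • (−a', ‖a'‖) for some negative scalar α with b' = α a'. -/
/-!
By Cauchy–Schwarz, `t * s = -⟪a', b'⟫ ≤ ‖a'‖ * ‖b'‖ ≤ t * s`, so both inequalities are equalities.
Since `t, s > 0`, the second one forces `t = ‖a'‖` and `s = ‖b'‖`; the first one is the equality
case `⟪a', b'⟫ = -(‖a'‖ * ‖b'‖)` of Cauchy–Schwarz, i.e. the angle between `a'` and `b'` is `π`,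
so `b'` is a negative multiple of `a'`.
-/

open RealInnerProductSpace InnerProductGeometry

lemma pos_of_norm_le_of_not_both_zero {E : Type*} [NormedAddCommGroup E] {x : E} {t : ℝ}
    (hx : ‖x‖ ≤ t) (h0 : ¬(x = 0 ∧ t = 0)) : 0 < t := by
  refine (norm_nonneg x |>.trans hx).lt_of_ne fun ht => h0 ⟨?_, ht.symm⟩
  exact norm_le_zero_iff.mp (ht ▸ hx)

variable {F : Type*} [NormedAddCommGroup F] [InnerProductSpace ℝ F]

lemma norm_eq_of_inner_add_mul_eq_zero {x y : F} {t s : ℝ} (hx : ‖x‖ ≤ t) (hy : ‖y‖ ≤ s)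
    (ht : 0 < t) (hs : 0 < s) (horth : ⟪x, y⟫ + t * s = 0) : ‖x‖ = t ∧ ‖y‖ = s := by
  have hle : ‖x‖ * ‖y‖ ≤ t * s := mul_le_mul hx hy (norm_nonneg y) ht.le
  have hge : t * s ≤ ‖x‖ * ‖y‖ := by
    linarith [neg_le_of_abs_le (abs_real_inner_le_norm x y)]
  have hx0 : 0 < ‖x‖ :=
    pos_of_mul_pos_left (mul_pos ht hs |>.trans_le hge) (norm_nonneg y)
  exact (mul_eq_mul_iff_eq_and_eq_of_pos hx hy hx0 hs).mp (hle.antisymm hge)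

theorem soc_orth_structure (a' b' : EuclideanSpace ℝ (Fin 2)) (t s : ℝ)
    (ha : ‖a'‖ ≤ t) (hb : ‖b'‖ ≤ s)
    (ha0 : ¬(a' = 0 ∧ t = 0)) (hb0 : ¬(b' = 0 ∧ s = 0))
    (horth : inner ℝ a' b' + t * s = (0 : ℝ)) :
    t = ‖a'‖ ∧ s = ‖b'‖ ∧
      ∃ α : ℝ, α < 0 ∧ b' = α • a' ∧ s = |α| * ‖a'‖ := by
  have ht := pos_of_norm_le_of_not_both_zero ha ha0
  have hs := pos_of_norm_le_of_not_both_zero hb hb0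
  obtain ⟨hta, hsb⟩ := norm_eq_of_inner_add_mul_eq_zero ha hb ht hs horth
  have hinner : ⟪a', b'⟫ = -(‖a'‖ * ‖b'‖) := by rw [hta, hsb]; linarith
  have ha' : a' ≠ 0 := norm_pos_iff.mp (hta ▸ ht)
  have hb' : b' ≠ 0 := norm_pos_iff.mp (hsb ▸ hs)
  obtain ⟨-, α, hα, rfl⟩ :=
    angle_eq_pi_iff.mp ((inner_eq_neg_mul_norm_iff_angle_eq_pi ha' hb').mp hinner)
  exact ⟨hta.symm, hsb.symm, α, hα, rfl, by rw [← hsb, norm_smul, Real.norm_eq_abs]⟩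
end

section
/- A nonnegative matrix S ∈ ℝ_{≥0}^{I×J} admits a Q^k-factorization (i.e., vectors a_i, b_j ∈ Q^k with S[i,j] = ⟨a_i, b_j⟩) if and only if S can be written as a sum S = M_1 + ⋯ + M_k of k nonnegative matrices each admitting a Q¹-factorization. -/
/-- A matrix admits a `Q¹`-factorization. -/
def SocRankOne {I J : Type*} (M : I → J → ℝ) : Prop :=
  ∃ (a : I → Fin 3 → ℝ) (b : J → Fin 3 → ℝ),
    (∀ i, soc (a i)) ∧ (∀ j, soc (b j)) ∧
    ∀ i j, M i j = ∑ x, a i x * b j x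

lemma soc_inner_nonneg (a b : Fin 3 → ℝ) (ha : soc a) (hb : soc b) :
    0 ≤ ∑ x, a x * b x := by
  rw [Fin.sum_univ_three]
  unfold soc at ha hb
  set sa := Real.sqrt (a 0 ^ 2 + a 1 ^ 2) with hsa
  set sb := Real.sqrt (b 0 ^ 2 + b 1 ^ 2) with hsb
  have hsa0 : 0 ≤ sa := Real.sqrt_nonneg _
  have hsb0 : 0 ≤ sb := Real.sqrt_nonneg _
  have hsa2 : sa ^ 2 = a 0 ^ 2 + a 1 ^ 2 := Real.sq_sqrt (by positivity)
  have hsb2 : sb ^ 2 = b 0 ^ 2 + b 1 ^ 2 := Real.sq_sqrt (by positivity)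
  have hcs : (a 0 * b 0 + a 1 * b 1) ^ 2 ≤ (sa * sb) ^ 2 := by
    nlinarith [sq_nonneg (a 0 * b 1 - a 1 * b 0)]
  have hmul : sa * sb ≤ a 2 * b 2 := mul_le_mul ha hb hsb0 (hsa0.trans ha)
  nlinarith [sq_nonneg (a 0 * b 0 + a 1 * b 1 + sa * sb), mul_nonneg hsa0 hsb0]

theorem Qk_factorization_iff_sum_rank_one {I J : Type*} (S : I → J → ℝ)
    (hS : ∀ i j, 0 ≤ S i j) (k : ℕ) :
    (∃ (a : I → Fin k → Fin 3 → ℝ) (b : J → Fin k → Fin 3 → ℝ),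
        (∀ i l, soc (a i l)) ∧ (∀ j l, soc (b j l)) ∧
        ∀ i j, S i j = ∑ l, ∑ x, a i l x * b j l x) ↔
    (∃ M : Fin k → I → J → ℝ,
        (∀ l i j, 0 ≤ M l i j) ∧ (∀ l, SocRankOne (M l)) ∧
        ∀ i j, S i j = ∑ l, M l i j) := by
  constructor
  · rintro ⟨a, b, ha, hb, hab⟩
    refine ⟨fun l i j => ∑ x, a i l x * b j l x, ?_, ?_, ?_⟩
    · intro l i j
      exact soc_inner_nonneg _ _ (ha i l) (hb j l)
    · intro l
      exact ⟨fun i => a i l, fun j => b j l, fun i => ha i l, fun j => hb j l,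
        fun i j => rfl⟩
    · exact hab
  · rintro ⟨M, hM0, hM1, hMs⟩
    choose a b ha hb hab using hM1
    refine ⟨fun i l => a l i, fun j l => b l j, fun i l => ha l i, fun j l => hb l j,
      fun i j => ?_⟩
    rw [hMs]
    exact Finset.sum_congr rfl fun l _ => hab l i j
end

section
/- Suppose M ∈ ℝ^{C(n,2) × n} has a factorization M[e,j] = ⟨a_e, b_j⟩ with a_e, b_j in the three-dimensional second-order cone Q, and M[e,j] = 0 whenever j ∈ e. Let S_1 = {j : b_j ≠ 0} and E_1(S_1) = {e = {j1, j2} : j1, j2 ∈ S_1 and a_e ≠ 0}. If C is a connected component of the graph (S_1, E_1(S_1)), then M[e, j] = 0 for every 2-subset e ⊆ C and every j ∈ C. -/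
lemma soc_facts {u : Fin 3 → ℝ} (hu : soc u) (h : u ≠ 0) :
    0 < u 2 ∧ u 0 ^ 2 + u 1 ^ 2 ≤ u 2 ^ 2 := by
  have h0 : (0:ℝ) ≤ u 0 ^ 2 + u 1 ^ 2 := by positivity
  have hs := Real.sq_sqrt h0
  have hnn : 0 ≤ u 2 := le_trans (Real.sqrt_nonneg _) hu
  have hle : u 0 ^ 2 + u 1 ^ 2 ≤ u 2 ^ 2 := by
    calc u 0 ^ 2 + u 1 ^ 2 = Real.sqrt (u 0 ^ 2 + u 1 ^ 2) ^ 2 := hs.symm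
    _ ≤ u 2 ^ 2 := pow_le_pow_left₀ (Real.sqrt_nonneg _) hu 2
  refine ⟨?_, hle⟩
  rcases lt_or_eq_of_le hnn with h2 | h2
  · exact h2
  · exfalso; apply h; funext i
    have h00 : u 0 = 0 := by nlinarith
    have h11 : u 1 = 0 := by nlinarith
    fin_cases i <;> simp [h00, h11, ← h2]

lemma key {u v : Fin 3 → ℝ} (hu : soc u) (hv : soc v) (hu0 : u ≠ 0) (hv0 : v ≠ 0)
    (h : u 0 * v 0 + u 1 * v 1 + u 2 * v 2 = 0) :
    u 2 * v 0 + v 2 * u 0 = 0 ∧ u 2 * v 1 + v 2 * u 1 = 0 := by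
  obtain ⟨hu2, hule⟩ := soc_facts hu hu0
  obtain ⟨hv2, hvle⟩ := soc_facts hv hv0
  have h' : u 0 * v 0 + u 1 * v 1 = -(u 2 * v 2) := by linarith
  have hsq : (u 0 * v 0 + u 1 * v 1) ^ 2 = (u 2 * v 2) ^ 2 := by rw [h']; ring
  have hueq : u 0 ^ 2 + u 1 ^ 2 = u 2 ^ 2 := by
    nlinarith [sq_nonneg (u 0 * v 1 - u 1 * v 0), hsq, mul_pos hv2 hv2,
      mul_nonneg (add_nonneg (sq_nonneg (u 0)) (sq_nonneg (u 1))) (sub_nonneg.mpr hvle)]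
  have hveq : v 0 ^ 2 + v 1 ^ 2 = v 2 ^ 2 := by
    nlinarith [sq_nonneg (u 0 * v 1 - u 1 * v 0), hsq, mul_pos hu2 hu2, hueq]
  have hsum : (u 2 * v 0 + v 2 * u 0) ^ 2 + (u 2 * v 1 + v 2 * u 1) ^ 2 = 0 := by
    linear_combination u 2 ^ 2 * hveq + v 2 ^ 2 * hueq + 2 * u 2 * v 2 * h'
  constructor <;>
  · apply pow_eq_zero_iff (n := 2) (by norm_num) |>.mp
    nlinarith [sq_nonneg (u 2 * v 0 + v 2 * u 0), sq_nonneg (u 2 * v 1 + v 2 * u 1)]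

lemma step {n : ℕ} (a : Sym2 (Fin n) → Fin 3 → ℝ) (b : Fin n → Fin 3 → ℝ)
    (ha : ∀ e, soc (a e)) (hb : ∀ j, soc (b j))
    (hzero : ∀ j1 j2 : Fin n, j1 ≠ j2 → ∑ x, a s(j1, j2) x * b j1 x = 0)
    (i k : Fin n) (hik : i ≠ k) (hbi : b i ≠ 0) (hbk : b k ≠ 0) (hae : a s(i, k) ≠ 0) :
    ∃ c : ℝ, c ≠ 0 ∧ ∀ x, b k x = c * b i x := by
  set u := a s(i, k) with hu
  have h1 : u 0 * b i 0 + u 1 * b i 1 + u 2 * b i 2 = 0 := by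
    have := hzero i k hik
    rw [Fin.sum_univ_three] at this
    exact this
  have h2 : u 0 * b k 0 + u 1 * b k 1 + u 2 * b k 2 = 0 := by
    have := hzero k i hik.symm
    rw [Fin.sum_univ_three, Sym2.eq_swap] at this
    exact this
  obtain ⟨ki1, ki2⟩ := key (ha _) (hb i) hae hbi h1
  obtain ⟨kk1, kk2⟩ := key (ha _) (hb k) hae hbk h2
  obtain ⟨hu2, -⟩ := soc_facts (ha s(i,k)) hae
  obtain ⟨hi2, -⟩ := soc_facts (hb i) hbi
  obtain ⟨hk2, -⟩ := soc_facts (hb k) hbk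
  have e0 : b k 0 = b k 2 / b i 2 * b i 0 := by
    rw [div_mul_eq_mul_div, eq_comm, div_eq_iff hi2.ne', eq_comm]
    apply mul_left_cancel₀ hu2.ne'
    linear_combination b i 2 * kk1 - b k 2 * ki1
  have e1 : b k 1 = b k 2 / b i 2 * b i 1 := by
    rw [div_mul_eq_mul_div, eq_comm, div_eq_iff hi2.ne', eq_comm]
    apply mul_left_cancel₀ hu2.ne'
    linear_combination b i 2 * kk2 - b k 2 * ki2
  have e2 : b k 2 = b k 2 / b i 2 * b i 2 := by
    rw [div_mul_eq_mul_div, mul_div_assoc, div_self hi2.ne', mul_one]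
  refine ⟨b k 2 / b i 2, by positivity, ?_⟩
  intro x
  fin_cases x
  · exact e0
  · exact e1
  · exact e2

theorem component_block_zero (n : ℕ)
    (a : Sym2 (Fin n) → Fin 3 → ℝ) (b : Fin n → Fin 3 → ℝ)
    (ha : ∀ e, soc (a e)) (hb : ∀ j, soc (b j))
    (hzero : ∀ j1 j2 : Fin n, j1 ≠ j2 → ∑ x, a s(j1, j2) x * b j1 x = 0)
    (G : SimpleGraph (Fin n))
    (hG : G = SimpleGraph.fromRel
      (fun j1 j2 => b j1 ≠ 0 ∧ b j2 ≠ 0 ∧ a s(j1, j2) ≠ 0))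
    (j0 : Fin n) (hj0 : b j0 ≠ 0)
    (C : Set (Fin n)) (hC : C = {j | G.Reachable j0 j}) :
    ∀ j1 ∈ C, ∀ j2 ∈ C, ∀ j ∈ C, j1 ≠ j2 →
      ∑ x, a s(j1, j2) x * b j x = 0 := by
  subst hG hC
  have walkP : ∀ (i j : Fin n),
      (SimpleGraph.fromRel
        (fun j1 j2 => b j1 ≠ 0 ∧ b j2 ≠ 0 ∧ a s(j1, j2) ≠ 0)).Walk i j →
      ∃ c : ℝ, c ≠ 0 ∧ ∀ x, b j x = c * b i x := by
    intro i j w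
    induction w with
    | nil => exact ⟨1, one_ne_zero, fun x => (one_mul _).symm⟩
    | @cons i m j h p ih =>
      obtain ⟨c2, hc2, hbc2⟩ := ih
      rw [SimpleGraph.fromRel_adj] at h
      obtain ⟨hne, hrel⟩ := h
      have facts : b i ≠ 0 ∧ b m ≠ 0 ∧ a s(i, m) ≠ 0 := by
        rcases hrel with ⟨h1, h2, h3⟩ | ⟨h1, h2, h3⟩
        · exact ⟨h1, h2, h3⟩
        · exact ⟨h2, h1, by rwa [Sym2.eq_swap]⟩
      obtain ⟨c1, hc1, hbc1⟩ := step a b ha hb hzero i m hne facts.1 facts.2.1 facts.2.2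
      exact ⟨c2 * c1, mul_ne_zero hc2 hc1, fun x => by rw [hbc2 x, hbc1 x]; ring⟩
  intro j1 hj1 j2 hj2 j hj hne
  obtain ⟨w1⟩ := hj1
  obtain ⟨w⟩ := hj
  obtain ⟨c1, hc1, hbc1⟩ := walkP j0 j1 w1
  obtain ⟨cj, hcj, hbcj⟩ := walkP j0 j w
  have hA := hzero j1 j2 hne
  have hr1 : ∑ x, a s(j1, j2) x * b j1 x = c1 * ∑ x, a s(j1, j2) x * b j0 x := by
    rw [Finset.mul_sum]
    exact Finset.sum_congr rfl fun x _ => by rw [hbc1 x]; ring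
  have h0 : ∑ x, a s(j1, j2) x * b j0 x = 0 := by
    rw [hr1] at hA
    rcases mul_eq_zero.mp hA with h | h
    · exact absurd h hc1
    · exact h
  calc ∑ x, a s(j1, j2) x * b j x = cj * ∑ x, a s(j1, j2) x * b j0 x := by
        rw [Finset.mul_sum]
        exact Finset.sum_congr rfl fun x _ => by rw [hbcj x]; ring
    _ = 0 := by rw [h0, mul_zero]
end

section
/- Suppose M[e,j] = ⟨a_e, b_j⟩ with a_e, b_j ∈ Q (three-dimensional second-order cone) for e a 2-subset of {1,…,n} and j ∈ {1,…,n}, that M[e,j] = 0 whenever j ∈ e, and that n ≥ 3n_0² for some n_0 ≥ 2. Then there exists a subset C ⊆ {1,…,n} with |C| ≥ n_0 such that M[e,j] = 0 for all 2-subsets e ⊆ C and all j ∈ C. -/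
/-!
Normalise every `b j` to the point `b j / (b j)₂` where its ray meets the plane `x₂ = 1`
(the zero vector goes to `0`). Two facts about the cone drive the proof. If `b` and `b'`
span the same ray, then `a ⊥ b` forces `a ⊥ b'`. And if `a, b ∈ Q` are nonzero and
orthogonal, then `b` lies on the ray of the mirror image `(-a₀, -a₁, a₂)` of `a`, so a
nonzero `a ∈ Q` is orthogonal to at most one ray of `Q`. Hence a set of indices on which
the normalisation is constant is a zero block, and so is a set of indices with pairwise
distinct nonzero normalisations, because there every `a_e` with `e` inside the set
vanishes. If neither kind of set had `n₀` elements, there would be at most `n₀` distinct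
normalisations, each taken fewer than `n₀` times, contradicting `n ≥ n₀²`.
-/

open Finset

lemma exists_le_card_fiber_or_injOn {α β : Type*} [Fintype α] [DecidableEq β]
    (f : α → β) (y₀ : β) {k : ℕ} (hk : k ^ 2 ≤ Fintype.card α) :
    (∃ y, k ≤ #{x | f x = y}) ∨
      ∃ t : Finset α, k ≤ #t ∧ Set.InjOn f t ∧ ∀ x ∈ t, f x ≠ y₀ := by
  rcases k.eq_zero_or_pos with rfl | hk0
  · exact Or.inr ⟨∅, by simp⟩
  by_contra! h
  set T := (univ.image f).erase y₀
  obtain ⟨t, -, hinj, himg⟩ :=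
    exists_subset_injOn_image_eq_of_surjOn Set.univ T fun y hy => by
      simpa using (mem_erase.mp hy).2
  have hT : #T < k := by
    by_contra! hT
    obtain ⟨x, hx, hfx⟩ := h.2 t (by rwa [← card_image_of_injOn hinj, himg]) hinj
    have hxT : f x ∈ T := himg ▸ mem_image_of_mem f hx
    simp [T, hfx] at hxT
  have himage : #(univ.image f) ≤ k := by
    have : #(univ.image f) - 1 ≤ #T := pred_card_le_card_erase
    omega
  have hsmall : #(univ.image f) * (k - 1) < #(univ : Finset α) := by
    calc #(univ.image f) * (k - 1) ≤ k * (k - 1) := Nat.mul_le_mul_right _ himage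
      _ < k ^ 2 := by rw [sq]; exact Nat.mul_lt_mul_of_pos_left (by omega) hk0
      _ ≤ _ := by rwa [card_univ]
  obtain ⟨y, -, hy⟩ := exists_lt_card_fiber_of_mul_lt_card_of_maps_to
    (fun x _ => mem_image_of_mem f (mem_univ x)) hsmall
  have := h.1 y
  omega

namespace soc

variable {v : Fin 3 → ℝ}

lemma apply_two_nonneg (h : soc v) : 0 ≤ v 2 :=
  (Real.sqrt_nonneg _).trans h

lemma sq_add_sq_le (h : soc v) : v 0 ^ 2 + v 1 ^ 2 ≤ v 2 ^ 2 :=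
  (Real.sqrt_le_left h.apply_two_nonneg).mp h

lemma eq_zero_of_apply_two_eq_zero (h : soc v) (h2 : v 2 = 0) : v = 0 := by
  have hsq := h.sq_add_sq_le
  rw [h2] at hsq
  have h0 : v 0 = 0 := by nlinarith [sq_nonneg (v 0), sq_nonneg (v 1)]
  have h1 : v 1 = 0 := by nlinarith [sq_nonneg (v 0), sq_nonneg (v 1)]
  ext i
  fin_cases i <;> simp [h0, h1, h2]

end soc

/-- The point where the ray through `v` meets the plane `v 2 = 1`; it is `0` when `v 2 = 0`. -/
noncomputable def dehomogenize (v : Fin 3 → ℝ) : Fin 3 → ℝ := (v 2)⁻¹ • v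

lemma apply_two_ne_zero_of_dehomogenize_ne_zero {v : Fin 3 → ℝ} (h : dehomogenize v ≠ 0) :
    v 2 ≠ 0 := by
  contrapose! h
  simp [dehomogenize, h]

lemma soc.apply_two_smul_dehomogenize {v : Fin 3 → ℝ} (h : soc v) :
    v 2 • dehomogenize v = v := by
  by_cases h2 : v 2 = 0
  · simp [h.eq_zero_of_apply_two_eq_zero h2]
  · exact smul_inv_smul₀ h2 v

lemma dotProduct_eq_zero_of_dehomogenize_eq {a b b' : Fin 3 → ℝ} (hb' : soc b')
    (h : dehomogenize b = dehomogenize b') (hab : a ⬝ᵥ b = 0) : a ⬝ᵥ b' = 0 := by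
  rw [← hb'.apply_two_smul_dehomogenize, ← h, dehomogenize, dotProduct_smul, dotProduct_smul,
    hab, smul_zero, smul_zero]

lemma soc.dehomogenize_eq_of_dotProduct_eq_zero {a b : Fin 3 → ℝ} (ha : soc a) (hb : soc b)
    (hab : a ⬝ᵥ b = 0) (ha2 : a 2 ≠ 0) (hb2 : b 2 ≠ 0) :
    dehomogenize b = dehomogenize ![-a 0, -a 1, a 2] := by
  rw [dotProduct, Fin.sum_univ_three] at hab
  have hA := ha.sq_add_sq_le
  have hB := hb.sq_add_sq_le
  have hsq : (a 2 * b 0 + b 2 * a 0) ^ 2 + (a 2 * b 1 + b 2 * a 1) ^ 2 ≤ 0 := by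
    have hexpand : (a 2 * b 0 + b 2 * a 0) ^ 2 + (a 2 * b 1 + b 2 * a 1) ^ 2
        = a 2 ^ 2 * (b 0 ^ 2 + b 1 ^ 2) + b 2 ^ 2 * (a 0 ^ 2 + a 1 ^ 2)
          - 2 * a 2 ^ 2 * b 2 ^ 2 := by
      linear_combination (2 * a 2 * b 2) * hab
    rw [hexpand]
    nlinarith [mul_le_mul_of_nonneg_left hB (sq_nonneg (a 2)),
      mul_le_mul_of_nonneg_left hA (sq_nonneg (b 2))]
  have h0 : a 2 * b 0 + b 2 * a 0 = 0 := by nlinarith [sq_nonneg (a 2 * b 1 + b 2 * a 1)]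
  have h1 : a 2 * b 1 + b 2 * a 1 = 0 := by nlinarith [sq_nonneg (a 2 * b 0 + b 2 * a 0)]
  ext i
  fin_cases i <;> simp [dehomogenize] <;> field_simp <;> linarith

lemma soc.eq_zero_of_dotProduct_eq_zero_of_dehomogenize_ne {a b b' : Fin 3 → ℝ}
    (ha : soc a) (hb : soc b) (hb' : soc b') (hab : a ⬝ᵥ b = 0) (hab' : a ⬝ᵥ b' = 0)
    (hb2 : b 2 ≠ 0) (hb'2 : b' 2 ≠ 0) (hne : dehomogenize b ≠ dehomogenize b') : a = 0 := by
  refine ha.eq_zero_of_apply_two_eq_zero (by_contra fun ha2 => hne ?_)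
  rw [ha.dehomogenize_eq_of_dotProduct_eq_zero hb hab ha2 hb2,
    ha.dehomogenize_eq_of_dotProduct_eq_zero hb' hab' ha2 hb'2]

theorem exists_large_zero_block_general (n n0 : ℕ) (hn : 3 * n0 ^ 2 ≤ n)
    (a : Sym2 (Fin n) → Fin 3 → ℝ) (b : Fin n → Fin 3 → ℝ)
    (ha : ∀ e, soc (a e)) (hb : ∀ j, soc (b j))
    (hzero : ∀ j1 j2 : Fin n, j1 ≠ j2 → ∑ x, a s(j1, j2) x * b j1 x = 0) :
    ∃ C : Finset (Fin n), n0 ≤ C.card ∧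
      ∀ j1 ∈ C, ∀ j2 ∈ C, ∀ j ∈ C, j1 ≠ j2 →
        ∑ x, a s(j1, j2) x * b j x = 0 := by
  classical
  change ∃ C : Finset (Fin n), n0 ≤ C.card ∧
    ∀ j1 ∈ C, ∀ j2 ∈ C, ∀ j ∈ C, j1 ≠ j2 → a s(j1, j2) ⬝ᵥ b j = 0
  have hzero' : ∀ j1 j2 : Fin n, j1 ≠ j2 → a s(j1, j2) ⬝ᵥ b j2 = 0 := fun j1 j2 h => by
    rw [Sym2.eq_swap]; exact hzero j2 j1 h.symm
  obtain ⟨u, hu⟩ | ⟨t, ht, hinj, hnz⟩ :=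
    exists_le_card_fiber_or_injOn (fun j => dehomogenize (b j)) 0 (k := n0)
      (by rw [Fintype.card_fin]; omega)
  · refine ⟨_, hu, fun j1 hj1 j2 _ j hj h => ?_⟩
    simp only [mem_filter, mem_univ, true_and] at hj1 hj
    exact dotProduct_eq_zero_of_dehomogenize_eq (hb j) (hj1.trans hj.symm) (hzero j1 j2 h)
  · refine ⟨t, ht, fun j1 hj1 j2 hj2 j _ h => ?_⟩
    rw [(ha _).eq_zero_of_dotProduct_eq_zero_of_dehomogenize_ne (hb j1) (hb j2)
      (hzero j1 j2 h) (hzero' j1 j2 h)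
      (apply_two_ne_zero_of_dehomogenize_ne_zero (hnz j1 hj1))
      (apply_two_ne_zero_of_dehomogenize_ne_zero (hnz j2 hj2))
      (fun hd => h (hinj hj1 hj2 hd)), zero_dotProduct]

theorem exists_large_zero_block (n n0 : ℕ) (hn0 : 2 ≤ n0) (hn : 3 * n0 ^ 2 ≤ n)
    (a : Sym2 (Fin n) → Fin 3 → ℝ) (b : Fin n → Fin 3 → ℝ)
    (ha : ∀ e, soc (a e)) (hb : ∀ j, soc (b j))
    (hzero : ∀ j1 j2 : Fin n, j1 ≠ j2 → ∑ x, a s(j1, j2) x * b j1 x = 0) :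
    ∃ C : Finset (Fin n), n0 ≤ C.card ∧
      ∀ j1 ∈ C, ∀ j2 ∈ C, ∀ j ∈ C, j1 ≠ j2 →
        ∑ x, a s(j1, j2) x * b j x = 0 :=
  exists_large_zero_block_general n n0 hn a b ha hb hzero
end

section
/- Let cov_soc(A_n) denote the soc-covering number of the matrix A_n with sparsity pattern A_n[e,j] = 0 iff j ∈ e (rows indexed by 2-subsets e of [n], columns by j ∈ [n]). Then for any n_0 ≥ 2, cov_soc(A_{3n_0²}) ≥ cov_soc(A_{n_0}) + 1. Consequently cov_soc(A_n) → ∞ as n → ∞. -/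
/-- Rows of `A_n` are indexed by 2-element subsets of `[n]`, i.e. non-diagonal
elements of `Sym2 (Fin n)`. -/
def Edges (n : ℕ) : Type := {e : Sym2 (Fin n) // ¬ e.IsDiag}

/-- The soc-covering number of (any matrix with) the sparsity pattern of `A_n`:
`A_n[e,j] = 0` iff `j ∈ e`. -/
noncomputable def covSocA (n : ℕ) : ℕ :=
  sInf {k | ∃ M : Fin k → Edges n → Fin n → ℝ,
    (∀ l, SocRankOne (M l)) ∧
    ∀ (e : Edges n) (j : Fin n), (∑ l, M l e j) = 0 ↔ j ∈ e.val}

open Finset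

lemma soc_iff {v : Fin 3 → ℝ} : soc v ↔ 0 ≤ v 2 ∧ v 0 ^ 2 + v 1 ^ 2 ≤ v 2 ^ 2 :=
  Real.sqrt_le_iff

namespace soc

variable {u v a p q : Fin 3 → ℝ}

lemma eq_zero_of_two_eq_zero (hv : soc v) (h2 : v 2 = 0) : v = 0 := by
  obtain ⟨-, hsq⟩ := soc_iff.mp hv
  have h0 : v 0 = 0 := by nlinarith [sq_nonneg (v 0), sq_nonneg (v 1)]
  have h1 : v 1 = 0 := by nlinarith [sq_nonneg (v 0), sq_nonneg (v 1)]
  ext k; fin_cases k <;> assumption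

lemma two_pos (hv : soc v) (h : v ≠ 0) : 0 < v 2 :=
  (soc_iff.mp hv).1.lt_of_ne fun h2 => h (hv.eq_zero_of_two_eq_zero h2.symm)

lemma smul (hv : soc v) {c : ℝ} (hc : 0 ≤ c) : soc (c • v) := by
  obtain ⟨h2, hsq⟩ := soc_iff.mp hv
  refine soc_iff.mpr ⟨by simpa using mul_nonneg hc h2, ?_⟩
  simp only [Pi.smul_apply, smul_eq_mul]
  nlinarith [sq_nonneg c]

lemma dotProduct_nonneg (hu : soc u) (hv : soc v) : 0 ≤ u ⬝ᵥ v := by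
  obtain ⟨hu2, hu⟩ := soc_iff.mp hu
  obtain ⟨hv2, hv⟩ := soc_iff.mp hv
  rw [dotProduct, Fin.sum_univ_three]
  nlinarith [sq_nonneg (u 0 * v 1 - u 1 * v 0), sq_nonneg (u 0 * v 0 + u 1 * v 1),
    mul_nonneg hu2 hv2, mul_le_mul hu hv (by positivity) (sq_nonneg _)]

/-- Orthogonality to a point `p` of the unit disc forces equality in Cauchy–Schwarz for
`(a 0, a 1)` and `(p 0, p 1)`. -/
lemma eq_neg_mul_of_dotProduct_eq_zero (ha : soc a) (hp : soc p) (hp2 : p 2 = 1)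
    (h : a ⬝ᵥ p = 0) : a 0 = -(a 2 * p 0) ∧ a 1 = -(a 2 * p 1) := by
  obtain ⟨-, ha⟩ := soc_iff.mp ha
  obtain ⟨-, hp⟩ := soc_iff.mp hp
  rw [hp2, one_pow] at hp
  rw [dotProduct, Fin.sum_univ_three, hp2] at h
  have hsum : (a 0 + a 2 * p 0) ^ 2 + (a 1 + a 2 * p 1) ^ 2 ≤ 0 := calc
    _ = (a 0 ^ 2 + a 1 ^ 2 - a 2 ^ 2) + a 2 ^ 2 * (p 0 ^ 2 + p 1 ^ 2 - 1)
        + 2 * a 2 * (a 0 * p 0 + a 1 * p 1 + a 2 * 1) := by ring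
    _ ≤ 0 := by
      rw [h, mul_zero, add_zero]
      nlinarith [mul_le_mul_of_nonneg_left hp (sq_nonneg (a 2))]
  constructor <;> nlinarith [sq_nonneg (a 0 + a 2 * p 0), sq_nonneg (a 1 + a 2 * p 1)]

lemma eq_zero_of_dotProduct_eq_zero_of_ne (ha : soc a) (hp : soc p) (hq : soc q)
    (hp2 : p 2 = 1) (hq2 : q 2 = 1) (hap : a ⬝ᵥ p = 0) (haq : a ⬝ᵥ q = 0) (hpq : p ≠ q) :
    a = 0 := by
  refine ha.eq_zero_of_two_eq_zero (by_contra fun ha2 => hpq ?_)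
  obtain ⟨hp0, hp1⟩ := eq_neg_mul_of_dotProduct_eq_zero ha hp hp2 hap
  obtain ⟨hq0, hq1⟩ := eq_neg_mul_of_dotProduct_eq_zero ha hq hq2 haq
  have h0 : p 0 = q 0 := mul_left_cancel₀ ha2 (by linarith)
  have h1 : p 1 = q 1 := mul_left_cancel₀ ha2 (by linarith)
  ext k; fin_cases k
  exacts [h0, h1, hp2.trans hq2.symm]

end soc

section dehomogenize

variable {a v w : Fin 3 → ℝ}

lemma dehomogenize_two (h : v 2 ≠ 0) : dehomogenize v 2 = 1 := by
  simp [dehomogenize, h]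

lemma dotProduct_dehomogenize : a ⬝ᵥ dehomogenize v = (v 2)⁻¹ * (a ⬝ᵥ v) :=
  dotProduct_smul _ _ _

lemma soc_dehomogenize (hv : soc v) : soc (dehomogenize v) :=
  hv.smul (inv_nonneg.mpr (soc_iff.mp hv).1)

lemma soc.eq_smul_dehomogenize (hv : soc v) : v = v 2 • dehomogenize v := by
  by_cases h : v 2 = 0
  · simp [hv.eq_zero_of_two_eq_zero h]
  · rw [dehomogenize, smul_inv_smul₀ h]

lemma dotProduct_eq_zero_of_dehomogenize_eq_s12 (hw : soc w)
    (h : dehomogenize v = dehomogenize w) (hav : a ⬝ᵥ v = 0) : a ⬝ᵥ w = 0 := by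
  rw [hw.eq_smul_dehomogenize, dotProduct_smul, ← h, dotProduct_dehomogenize, hav]
  simp

lemma soc.eq_zero_of_dehomogenize_ne (ha : soc a) (hv : soc v) (hw : soc w) (hv2 : v 2 ≠ 0)
    (hw2 : w 2 ≠ 0) (hne : dehomogenize v ≠ dehomogenize w) (hav : a ⬝ᵥ v = 0)
    (haw : a ⬝ᵥ w = 0) : a = 0 :=
  ha.eq_zero_of_dotProduct_eq_zero_of_ne (soc_dehomogenize hv) (soc_dehomogenize hw)
    (dehomogenize_two hv2) (dehomogenize_two hw2) (by simp [dotProduct_dehomogenize, hav])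
    (by simp [dotProduct_dehomogenize, haw]) hne

end dehomogenize

lemma Finset.exists_injOn_or_const_of_mul_lt_card {α β : Type*} [DecidableEq β] (f : α → β)
    {s : Finset α} {m : ℕ} (hs : m * m < #s) :
    ∃ t ⊆ s, m < #t ∧ (Set.InjOn f t ∨ ∃ y, ∀ x ∈ t, f x = y) := by
  classical
  by_cases himg : m < #(s.image f)
  · obtain ⟨t, hts, hinj, himg_t⟩ := exists_subset_injOn_image_eq_of_surjOn (f := f) (↑s)
      (s.image f) (by rw [coe_image]; exact Set.surjOn_image f s)
    refine ⟨t, by exact_mod_cast hts, ?_, .inl hinj⟩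
    rwa [← card_image_of_injOn hinj, himg_t]
  · obtain ⟨y, -, hy⟩ := exists_lt_card_fiber_of_mul_lt_card_of_maps_to
      (fun x hx => mem_image_of_mem f hx) ((Nat.mul_le_mul_right m (not_lt.mp himg)).trans_lt hs)
    exact ⟨_, filter_subset _ s, hy, .inr ⟨y, fun x hx => (mem_filter.mp hx).2⟩⟩

theorem SocRankOne.exists_zero_block {V : Type*} [Fintype V]
    {M : {e : Sym2 V // ¬e.IsDiag} → V → ℝ} (hM : SocRankOne M)
    (hM0 : ∀ e j, j ∈ e.val → M e j = 0) {m : ℕ} (hV : m * (m + 1) < Fintype.card V) :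
    ∃ C : Finset V, m < #C ∧ ∀ e j, (∀ i ∈ e.val, i ∈ C) → j ∈ C → M e j = 0 := by
  classical
  obtain ⟨a, b, ha, hb, hab⟩ := hM
  replace hab : ∀ e j, M e j = a e ⬝ᵥ b j := hab
  simp only [hab] at hM0 ⊢
  by_cases hZ : m < #{j | b j = 0}
  · exact ⟨_, hZ, fun e j _ hj => by simp [(mem_filter.mp hj).2]⟩
  have hN : m * m < #{j | b j ≠ 0} := by
    have := card_filter_add_card_filter_not (s := univ) (fun j => b j = 0)
    rw [card_univ] at this
    nlinarith
  obtain ⟨C, hCN, hC, hCdir⟩ :=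
    exists_injOn_or_const_of_mul_lt_card (fun j => dehomogenize (b j)) hN
  refine ⟨C, hC, ?_⟩
  rintro ⟨e, he⟩ j heC hj
  induction e using Sym2.ind with | _ i i' => ?_
  have hi : i ∈ C := heC i (Sym2.mem_mk_left i i')
  have hi' : i' ∈ C := heC i' (Sym2.mem_mk_right i i')
  have hai : a ⟨s(i, i'), he⟩ ⬝ᵥ b i = 0 := hM0 _ _ (Sym2.mem_mk_left i i')
  have hai' : a ⟨s(i, i'), he⟩ ⬝ᵥ b i' = 0 := hM0 _ _ (Sym2.mem_mk_right i i')
  rcases hCdir with hinj | ⟨p, hp⟩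
  · have hb2 : ∀ k ∈ C, b k 2 ≠ 0 := fun k hk =>
      ((hb k).two_pos (mem_filter.mp (hCN hk)).2).ne'
    have hne : dehomogenize (b i) ≠ dehomogenize (b i') :=
      hinj.ne hi hi' fun h => he (Sym2.mk_isDiag_iff.mpr h)
    rw [(ha _).eq_zero_of_dehomogenize_ne (hb i) (hb i') (hb2 i hi) (hb2 i' hi') hne hai hai',
      zero_dotProduct]
  · exact dotProduct_eq_zero_of_dehomogenize_eq_s12 (hb j) ((hp i hi).trans (hp j hj).symm) hai

lemma SocRankOne.nonneg {I J : Type*} {M : I → J → ℝ} (hM : SocRankOne M) (i : I) (j : J) :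
    0 ≤ M i j := by
  obtain ⟨a, b, ha, hb, hab⟩ := hM
  exact (hab i j).symm ▸ (ha i).dotProduct_nonneg (hb j)

lemma SocRankOne.comp {I J I' J' : Type*} {M : I → J → ℝ} (hM : SocRankOne M) (f : I' → I)
    (g : J' → J) : SocRankOne fun i j => M (f i) (g j) := by
  obtain ⟨a, b, ha, hb, hab⟩ := hM
  exact ⟨a ∘ f, b ∘ g, fun i => ha (f i), fun j => hb (g j), fun i j => hab (f i) (g j)⟩

lemma socRankOne_mul {I J : Type*} {f : I → ℝ} {g : J → ℝ} (hf : ∀ i, 0 ≤ f i)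
    (hg : ∀ j, 0 ≤ g j) : SocRankOne fun i j => f i * g j := by
  refine ⟨fun i => ![0, 0, f i], fun j => ![0, 0, g j], fun i => ?_, fun j => ?_, fun i j => ?_⟩
  · simpa [soc] using hf i
  · simpa [soc] using hg j
  · simp [Fin.sum_univ_three]

def Edges.map {m n : ℕ} (f : Fin m ↪ Fin n) (e : Edges m) : Edges n :=
  ⟨e.val.map f, (Sym2.isDiag_map f.injective).not.mpr e.2⟩

lemma Edges.apply_mem_map_iff {m n : ℕ} (f : Fin m ↪ Fin n) (e : Edges m) (j : Fin m) :
    f j ∈ (e.map f).val ↔ j ∈ e.val := by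
  simp [Edges.map, Sym2.mem_map, f.injective.eq_iff]

/-- The set whose infimum is `covSocA n`. -/
def HasSocCover (n k : ℕ) : Prop :=
  ∃ M : Fin k → Edges n → Fin n → ℝ,
    (∀ l, SocRankOne (M l)) ∧
    ∀ (e : Edges n) (j : Fin n), (∑ l, M l e j) = 0 ↔ j ∈ e.val

/-- The `l`-th matrix is column `l` of the pattern. -/
lemma hasSocCover_self (n : ℕ) : HasSocCover n n := by
  classical
  refine ⟨fun l e j => (if l ∈ e.val then 0 else 1) * (if j = l then 1 else 0),
    fun l => socRankOne_mul (by intro; split_ifs <;> norm_num) (by intro; split_ifs <;> norm_num),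
    fun e j => ?_⟩
  by_cases hj : j ∈ e.val <;> simp [hj]

lemma covSocA_spec (n : ℕ) : HasSocCover n (covSocA n) :=
  Nat.sInf_mem (s := {k | HasSocCover n k}) ⟨n, hasSocCover_self n⟩

lemma covSocA_le {n k : ℕ} (h : HasSocCover n k) : covSocA n ≤ k :=
  Nat.sInf_le h

lemma HasSocCover.comap {m n k : ℕ} (f : Fin m ↪ Fin n) (h : HasSocCover n k) :
    HasSocCover m k := by
  obtain ⟨M, hM, hsum⟩ := h
  exact ⟨fun l e j => M l (e.map f) (f j), fun l => (hM l).comp _ _,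
    fun e j => (hsum _ _).trans (e.apply_mem_map_iff f j)⟩

lemma covSocA_mono : Monotone covSocA := fun _ _ h =>
  covSocA_le ((covSocA_spec _).comap (Fin.castLEEmb h))

lemma not_hasSocCover_zero {n : ℕ} (hn : 3 ≤ n) : ¬HasSocCover n 0 := by
  rintro ⟨M, -, hsum⟩
  have h01 : ¬(s((⟨0, by omega⟩ : Fin n), ⟨1, by omega⟩)).IsDiag := by simp
  have := (hsum ⟨_, h01⟩ ⟨2, by omega⟩).mp (by simp)
  simp at this

lemma HasSocCover.of_succ {m N k : ℕ} (hN : m * (m + 1) < N) (h : HasSocCover N (k + 1)) :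
    HasSocCover (m + 1) k := by
  obtain ⟨M, hM, hsum⟩ := h
  have hM0 : ∀ e j, j ∈ e.val → M 0 e j = 0 := fun e j hj =>
    (sum_eq_zero_iff_of_nonneg fun l _ => (hM l).nonneg e j).mp ((hsum e j).mpr hj) 0
      (mem_univ _)
  obtain ⟨C, hC, hblock⟩ := (hM 0).exists_zero_block (V := Fin N) hM0 (by simpa using hN)
  let f : Fin (m + 1) ↪ Fin N := (C.orderEmbOfCardLe hC).toEmbedding
  have hf : ∀ i, f i ∈ C := C.orderEmbOfCardLe_mem hC
  refine ⟨fun l e j => M l.succ (e.map f) (f j), fun l => (hM _).comp _ _, fun e j => ?_⟩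
  have hzero : M 0 (e.map f) (f j) = 0 := hblock _ _
    (fun i hi => by obtain ⟨i0, -, rfl⟩ := Sym2.mem_map.mp hi; exact hf i0) (hf j)
  rw [← e.apply_mem_map_iff f, ← hsum, Fin.sum_univ_succ, hzero, zero_add]

lemma covSocA_add_one_le {m N : ℕ} (hN : 3 ≤ N) (hmN : m * (m + 1) < N) :
    covSocA (m + 1) + 1 ≤ covSocA N := by
  obtain ⟨k, hk⟩ : ∃ k, covSocA N = k + 1 := Nat.exists_eq_succ_of_ne_zero fun h =>
    not_hasSocCover_zero hN (h ▸ covSocA_spec N)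
  have := covSocA_le ((hk ▸ covSocA_spec N).of_succ hmN)
  omega

theorem covSocA_grows :
    (∀ n0 : ℕ, 2 ≤ n0 → covSocA n0 + 1 ≤ covSocA (3 * n0 ^ 2)) ∧
    Filter.Tendsto covSocA Filter.atTop Filter.atTop := by
  have step : ∀ n0 : ℕ, 2 ≤ n0 → covSocA n0 + 1 ≤ covSocA (3 * n0 ^ 2) := by
    rintro (_ | m) hm
    · omega
    · exact covSocA_add_one_le (by nlinarith) (by nlinarith)
  have unbounded : ∀ b, ∃ n, 2 ≤ n ∧ b ≤ covSocA n := by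
    intro b
    induction b with
    | zero => exact ⟨2, le_rfl, Nat.zero_le _⟩
    | succ b ih =>
      obtain ⟨n, hn, hb⟩ := ih
      exact ⟨3 * n ^ 2, by nlinarith, by linarith [step n hn]⟩
  exact ⟨step, Filter.tendsto_atTop_atTop_of_monotone covSocA_mono fun b =>
    (unbounded b).imp fun _ => And.right⟩
end

section
/- For real numbers t, a, b, c, s, the symmetric matrix [[t, a, b], [a, t, c], [b, c, s]] is positive semidefinite if and only if there exist u, v ∈ ℝ with u + v = 2s such that [[t+a, b+c], [b+c, u]] and [[t−a, b−c], [b−c, v]] are both positive semidefinite. -/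
/-!
Substituting `p = x + y`, `m = x - y` turns twice the quadratic form of the slice matrix into
`(t + a) p² + 2 (b + c) p z + (t - a) m² + 2 (b - c) m z + 2 s z²`, two binary forms coupled only
through the `z²` term. Splitting that term as `u z² + v z²` with the smallest admissible `u`,
namely `(b + c)² / (t + a)` from completing the square in `p`, leaves a nonnegative form in `(m, z)`.
-/

open Matrix

theorem posSemidef_fin_two_iff {A B C : ℝ} :
    PosSemidef !![A, B; B, C] ↔ ∀ q z : ℝ, 0 ≤ A * q ^ 2 + 2 * B * q * z + C * z ^ 2 := by
  have hsymm : (!![A, B; B, C]).IsSymm := by ext i j; fin_cases i <;> fin_cases j <;> rfl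
  simp only [posSemidef_iff_dotProduct_mulVec, isHermitian_iff_isSymm, hsymm, dotProduct,
    Pi.star_apply, star_trivial, mulVec, of_apply, cons_val', cons_val_fin_one, Fin.sum_univ_succ,
    Fin.isValue, cons_val_zero, Finset.univ_unique, Fin.default_eq_zero, cons_val_succ,
    Finset.sum_singleton, Fin.succ_zero_eq_one, Fin.forall_fin_succ_pi, Nat.reduceAdd, Fin.cons_zero,
    Fin.cons_one, forall_const, true_and]
  exact forall₂_congr fun q z => by ring_nf

theorem posSemidef_fin_three_iff {a b c d e f : ℝ} :
    PosSemidef !![a, b, c; b, d, e; c, e, f] ↔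
      ∀ x y z : ℝ, 0 ≤ a * x ^ 2 + d * y ^ 2 + f * z ^ 2 + 2 * (b * x * y + c * x * z + e * y * z) := by
  have hsymm : (!![a, b, c; b, d, e; c, e, f]).IsSymm := by
    ext i j; fin_cases i <;> fin_cases j <;> rfl
  simp only [posSemidef_iff_dotProduct_mulVec, isHermitian_iff_isSymm, hsymm, dotProduct,
    Pi.star_apply, star_trivial, mulVec, of_apply, cons_val', cons_val_fin_one, Fin.sum_univ_succ,
    Fin.isValue, cons_val_zero, cons_val_succ, Fin.succ_zero_eq_one, Finset.univ_unique,
    Fin.default_eq_zero, Finset.sum_singleton, Fin.succ_one_eq_two, Fin.forall_fin_succ_pi,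
    Nat.reduceAdd, Fin.cons_zero, Fin.cons_one, Fin.forall_fin_zero_pi, finZeroElim_eq_zero,
    zero_empty, Fin.cons_vecEmpty, Fin.cons_vecCons, Nat.succ_eq_add_one, cons_val, true_and]
  exact forall₃_congr fun x y z => by ring_nf

theorem quadratic_complete_square {K : Type*} [Field K] {A B : K} (hB : A = 0 → B = 0) (q z : K) :
    A * q ^ 2 + 2 * B * q * z + B ^ 2 / A * z ^ 2 = A * (q + B / A * z) ^ 2 := by
  rcases eq_or_ne A 0 with rfl | hA
  · simp [hB rfl]
  · field_simp
    ring

theorem posSemidef_arrow_iff {A B D E S : ℝ} :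
    PosSemidef !![A, 0, B; 0, D, E; B, E, S] ↔
      ∃ u v : ℝ, u + v = S ∧ PosSemidef !![A, B; B, u] ∧ PosSemidef !![D, E; E, v] := by
  simp only [posSemidef_fin_three_iff, posSemidef_fin_two_iff]
  constructor
  · intro h
    have hA : 0 ≤ A := by simpa using h 1 0 0
    have hB : A = 0 → B = 0 := by
      have hdiscrim := discrim_le_zero (a := A) (b := 2 * B) (c := S) fun p => by
        linear_combination h p 0 1
      intro hA0
      simp only [discrim, hA0] at hdiscrim
      nlinarith
    -- When `A = 0` we also have `B = 0`, and the junk value `B ^ 2 / 0 = 0` is then the right `u`.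
    refine ⟨B ^ 2 / A, S - B ^ 2 / A, by ring, fun q z => ?_, fun m z => ?_⟩
    · rw [quadratic_complete_square hB]
      positivity
    · set p := -(B / A * z)
      have hmin : A * p ^ 2 + 2 * B * p * z + B ^ 2 / A * z ^ 2 = 0 := by
        rw [quadratic_complete_square hB, neg_add_cancel]
        ring
      linear_combination h p m z + hmin
  · rintro ⟨u, v, rfl, h₁, h₂⟩ p m z
    linear_combination h₁ p z + h₂ m z

theorem posSemidef_slice_iff_arrow {t a b c s : ℝ} :
    PosSemidef !![t, a, b; a, t, c; b, c, s] ↔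
      PosSemidef !![t + a, 0, b + c; 0, t - a, b - c; b + c, b - c, 2 * s] := by
  simp only [posSemidef_fin_three_iff]
  constructor
  · intro h p m z
    linear_combination 2 * h ((p + m) / 2) ((p - m) / 2) z
  · intro h x y z
    linear_combination h (x + y) (x - y) z / 2

theorem slice_soc_rep (t a b c s : ℝ) :
    Matrix.PosSemidef !![t, a, b; a, t, c; b, c, s] ↔
      ∃ u v : ℝ, u + v = 2 * s ∧
        Matrix.PosSemidef !![t + a, b + c; b + c, u] ∧
        Matrix.PosSemidef !![t - a, b - c; b - c, v] := by
  rw [posSemidef_slice_iff_arrow, posSemidef_arrow_iff]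
end
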